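/- (Theorem 1) Let f_1, …, f_N : ℝⁿ → ℝⁿ be continuous vector fields. Assume there exist a continuously differentiable function V : ℝⁿ → ℝ, a compact set B ⊆ ℝⁿ, and constants γ ∈ ℝ, ρ > 0 such that V(x) = γ for all x on the topological boundary of B, V(x) > γ for all x ∈ ℝⁿ \ B, and ∇V(x) · f_i(x) ≤ -ρ for all x ∈ ℝⁿ \ B and all i = 1, …, N. Then B is an absorbing set for the switched system; moreover, for any compact set C ⊆ ℝⁿ not contained in B, the time t*_C = (max{V(y) : y ∈ closure(C \ B)} - γ)/ρ works: every solution with x(0) ∈ C satisfies x(t) ∈ B for all t ≥ t*_C. -/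

import Mathlib

/-- A solution of the switched system determined by the vector fields `f i` on `ℝⁿ`:
a function differentiable on `[0,∞)` such that at every time `t ≥ 0` its derivative
(within `[0,∞)`) is given by one of the vector fields (arbitrary switching). -/
def IsSwitchedSolution {n N : ℕ}
    (f : Fin N → EuclideanSpace ℝ (Fin n) → EuclideanSpace ℝ (Fin n))
    (x : ℝ → EuclideanSpace ℝ (Fin n)) : Prop :=
  ∀ t : ℝ, 0 ≤ t → ∃ i : Fin N, HasDerivWithinAt x (f i (x t)) (Set.Ici 0) t

/-- `M` is positively invariant for the switched system. -/
def PositivelyInvariant {n N : ℕ}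
    (f : Fin N → EuclideanSpace ℝ (Fin n) → EuclideanSpace ℝ (Fin n))
    (M : Set (EuclideanSpace ℝ (Fin n))) : Prop :=
  ∀ x : ℝ → EuclideanSpace ℝ (Fin n), IsSwitchedSolution f x →
    x 0 ∈ M → ∀ t : ℝ, 0 ≤ t → x t ∈ M

/-- `M` is an absorbing set for the switched system: it is positively invariant and
every compact set is uniformly absorbed into `M` after some time. -/
def AbsorbingSet {n N : ℕ}
    (f : Fin N → EuclideanSpace ℝ (Fin n) → EuclideanSpace ℝ (Fin n))
    (M : Set (EuclideanSpace ℝ (Fin n))) : Prop :=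
  PositivelyInvariant f M ∧
    ∀ C : Set (EuclideanSpace ℝ (Fin n)), IsCompact C →
      ∃ tC : ℝ, 0 ≤ tC ∧
        ∀ x : ℝ → EuclideanSpace ℝ (Fin n), IsSwitchedSolution f x →
          x 0 ∈ C → ∀ t : ℝ, tC ≤ t → x t ∈ M

/-!
While a switched solution stays outside `B`, every active field decreases `V` at rate at least
`ρ`, so `t ↦ V (x t) + ρ t` is nonincreasing there. A solution leaving `B` would do so at a last
time `u` with `x u` on the frontier, where `V = γ`; afterwards `V` would stay `≤ γ`, contradicting
`V > γ` off `B`. A solution starting in `C \ B` starts with `V ≤ max_{closure (C \ B)} V` and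
cannot keep `V > γ` for longer than `(max_{closure (C \ B)} V - γ) / ρ`.
-/

open Set

theorem ContinuousOn.exists_mem_frontier_mapsTo_compl {X : Type*} [TopologicalSpace X]
    {x : ℝ → X} {B : Set X} {s t : ℝ} (hx : ContinuousOn x (Icc s t)) (hB : IsClosed B)
    (hst : s ≤ t) (hs : x s ∈ B) (ht : x t ∉ B) :
    ∃ u ∈ Ico s t, x u ∈ frontier B ∧ MapsTo x (Ioc u t) Bᶜ := by
  set S := Icc s t ∩ x ⁻¹' B
  have hS : IsCompact S :=
    isCompact_Icc.of_isClosed_subset (hx.preimage_isClosed_of_isClosed isClosed_Icc hB)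
      inter_subset_left
  have hsS : s ∈ S := ⟨⟨le_rfl, hst⟩, hs⟩
  obtain ⟨⟨hsu, hut⟩, hu⟩ : sSup S ∈ S := hS.sSup_mem ⟨s, hsS⟩
  have hut' : sSup S < t := hut.lt_of_ne fun h => ht (h ▸ hu)
  have hout : MapsTo x (Ioc (sSup S) t) Bᶜ := fun r hr hrB =>
    hr.1.not_ge (le_csSup hS.bddAbove ⟨⟨hsu.trans hr.1.le, hr.2⟩, hrB⟩)
  refine ⟨sSup S, ⟨hsu, hut'⟩, ?_, hout⟩
  rw [frontier_eq_closure_inter_closure]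
  refine ⟨subset_closure hu, ContinuousWithinAt.mem_closure ?_ ?_ hout⟩
  · exact (hx _ ⟨hsu, hut⟩).mono (Ioc_subset_Icc_self.trans (Icc_subset_Icc_left hsu))
  · rw [closure_Ioc hut'.ne]
    exact left_mem_Icc.mpr hut

theorem Continuous.le_sSup_image_closure {X : Type*} [TopologicalSpace X] [R1Space X]
    {V : X → ℝ} (hV : Continuous V) {C s : Set X} (hC : IsCompact C) (hsC : s ⊆ C) {y : X}
    (hy : y ∈ s) : V y ≤ sSup (V '' closure s) :=
  le_csSup ((hC.closure_of_subset hsC).image hV).bddAbove (mem_image_of_mem V (subset_closure hy))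

variable {n N : ℕ} {f : Fin N → EuclideanSpace ℝ (Fin n) → EuclideanSpace ℝ (Fin n)}
  {V : EuclideanSpace ℝ (Fin n) → ℝ} {B : Set (EuclideanSpace ℝ (Fin n))} {γ ρ : ℝ}
  {x : ℝ → EuclideanSpace ℝ (Fin n)}

namespace IsSwitchedSolution

theorem continuousOn (hx : IsSwitchedSolution f x) : ContinuousOn x (Ici 0) :=
  fun t ht => (hx t ht).choose_spec.continuousWithinAt

theorem exists_hasDerivAt_comp (hx : IsSwitchedSolution f x) (hV : Differentiable ℝ V)
    {t : ℝ} (ht : 0 < t) :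
    ∃ i, HasDerivAt (fun s => V (x s)) (fderiv ℝ V (x t) (f i (x t))) t := by
  obtain ⟨i, hi⟩ := hx t ht.le
  exact ⟨i, (hV (x t)).hasFDerivAt.comp_hasDerivAt t (hi.hasDerivAt (Ici_mem_nhds ht))⟩

theorem sub_le_neg_mul_of_mapsTo_compl (hx : IsSwitchedSolution f x)
    (hV : Differentiable ℝ V) (hdec : ∀ y ∉ B, ∀ i, fderiv ℝ V y (f i y) ≤ -ρ)
    {a b : ℝ} (ha : 0 ≤ a) (hab : a ≤ b) (hout : MapsTo x (Ioo a b) Bᶜ) :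
    V (x b) - V (x a) ≤ -ρ * (b - a) := by
  have hderiv : ∀ t ∈ interior (Icc a b),
      ∃ i, HasDerivAt (fun s => V (x s)) (fderiv ℝ V (x t) (f i (x t))) t := by
    rw [interior_Icc]
    exact fun t ht => hx.exists_hasDerivAt_comp hV (ha.trans_lt ht.1)
  refine (convex_Icc a b).image_sub_le_mul_sub_of_deriv_le
    (hV.continuous.comp_continuousOn (hx.continuousOn.mono fun t ht => ha.trans ht.1))
    (fun t ht => (hderiv t ht).choose_spec.differentiableAt.differentiableWithinAt)
    (fun t ht => ?_) a (left_mem_Icc.mpr hab) b (right_mem_Icc.mpr hab) hab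
  obtain ⟨i, hi⟩ := hderiv t ht
  rw [interior_Icc] at ht
  exact hi.deriv ▸ hdec _ (hout ht) i

end IsSwitchedSolution

structure IsSwitchedLyapunovFunction
    (f : Fin N → EuclideanSpace ℝ (Fin n) → EuclideanSpace ℝ (Fin n))
    (V : EuclideanSpace ℝ (Fin n) → ℝ) (B : Set (EuclideanSpace ℝ (Fin n))) (γ ρ : ℝ) : Prop where
  differentiable : Differentiable ℝ V
  isClosed : IsClosed B
  eq_of_mem_frontier : ∀ y ∈ frontier B, V y = γ
  lt_of_notMem : ∀ y ∉ B, γ < V y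
  fderiv_le : ∀ y ∉ B, ∀ i, fderiv ℝ V y (f i y) ≤ -ρ
  pos : 0 < ρ

namespace IsSwitchedLyapunovFunction

theorem mem_of_mem_of_le (hL : IsSwitchedLyapunovFunction f V B γ ρ)
    (hx : IsSwitchedSolution f x) {s t : ℝ} (hs : 0 ≤ s) (hst : s ≤ t) (hxs : x s ∈ B) :
    x t ∈ B := by
  by_contra hxt
  obtain ⟨u, ⟨hsu, hut⟩, hu, hout⟩ :=
    (hx.continuousOn.mono fun r hr => hs.trans hr.1).exists_mem_frontier_mapsTo_compl
      hL.isClosed hst hxs hxt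
  have hdecay := hx.sub_le_neg_mul_of_mapsTo_compl hL.differentiable hL.fderiv_le
    (hs.trans hsu) hut.le (hout.mono_left Ioo_subset_Ioc_self)
  have := hL.lt_of_notMem _ hxt
  linarith [hL.eq_of_mem_frontier _ hu, mul_nonneg hL.pos.le (sub_nonneg.mpr hut.le)]

theorem positivelyInvariant (hL : IsSwitchedLyapunovFunction f V B γ ρ) :
    PositivelyInvariant f B :=
  fun _ hx hx0 _ ht => hL.mem_of_mem_of_le hx le_rfl ht hx0

theorem mem_of_sub_le_mul (hL : IsSwitchedLyapunovFunction f V B γ ρ)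
    (hx : IsSwitchedSolution f x) {t : ℝ} (ht : 0 ≤ t) (hV0 : V (x 0) - γ ≤ ρ * t) :
    x t ∈ B := by
  by_cases henter : ∃ s ∈ Icc 0 t, x s ∈ B
  · obtain ⟨s, ⟨hs, hst⟩, hxs⟩ := henter
    exact hL.mem_of_mem_of_le hx hs hst hxs
  push Not at henter
  have hxt := henter t ⟨ht, le_rfl⟩
  have hdecay := hx.sub_le_neg_mul_of_mapsTo_compl hL.differentiable hL.fderiv_le le_rfl ht
    fun s hs => henter s (Ioo_subset_Icc_self hs)
  linarith [hL.lt_of_notMem _ hxt]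

theorem mem_of_div_le (hL : IsSwitchedLyapunovFunction f V B γ ρ)
    (hx : IsSwitchedSolution f x) {C : Set (EuclideanSpace ℝ (Fin n))} (hC : IsCompact C)
    (hx0 : x 0 ∈ C) {t : ℝ} (ht0 : 0 ≤ t) (ht : (sSup (V '' closure (C \ B)) - γ) / ρ ≤ t) :
    x t ∈ B := by
  by_cases hx0B : x 0 ∈ B
  · exact hL.mem_of_mem_of_le hx le_rfl ht0 hx0B
  refine hL.mem_of_sub_le_mul hx ht0 ?_
  have := hL.differentiable.continuous.le_sSup_image_closure hC sdiff_subset ⟨hx0, hx0B⟩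
  rw [div_le_iff₀ hL.pos] at ht
  linarith

theorem div_nonneg_of_not_subset (hL : IsSwitchedLyapunovFunction f V B γ ρ)
    {C : Set (EuclideanSpace ℝ (Fin n))} (hC : IsCompact C) (hCB : ¬C ⊆ B) :
    0 ≤ (sSup (V '' closure (C \ B)) - γ) / ρ := by
  obtain ⟨y, hyC, hyB⟩ := not_subset.mp hCB
  have := hL.differentiable.continuous.le_sSup_image_closure hC sdiff_subset ⟨hyC, hyB⟩
  exact div_nonneg (by linarith [hL.lt_of_notMem y hyB]) hL.pos.le

end IsSwitchedLyapunovFunction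

theorem absorbing_set_of_lyapunov_general {n N : ℕ}
    (f : Fin N → EuclideanSpace ℝ (Fin n) → EuclideanSpace ℝ (Fin n))
    (V : EuclideanSpace ℝ (Fin n) → ℝ) (hV : ContDiff ℝ 1 V)
    (B : Set (EuclideanSpace ℝ (Fin n))) (hB : IsCompact B)
    (γ ρ : ℝ) (hρ : 0 < ρ)
    (hbd : ∀ x ∈ frontier B, V x = γ)
    (hgt : ∀ x ∉ B, V x > γ)
    (hdec : ∀ x ∉ B, ∀ i : Fin N, fderiv ℝ V x (f i x) ≤ -ρ) :
    AbsorbingSet f B ∧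
      ∀ C : Set (EuclideanSpace ℝ (Fin n)), IsCompact C → ¬ C ⊆ B →
        ∀ x : ℝ → EuclideanSpace ℝ (Fin n), IsSwitchedSolution f x → x 0 ∈ C →
          ∀ t : ℝ, (sSup (V '' closure (C \ B)) - γ) / ρ ≤ t → x t ∈ B := by
  have hL : IsSwitchedLyapunovFunction f V B γ ρ :=
    ⟨hV.differentiable one_ne_zero, hB.isClosed, hbd, hgt, hdec, hρ⟩
  refine ⟨⟨hL.positivelyInvariant, fun C hC => ?_⟩, fun C hC hCB x hx hx0 t ht =>
    hL.mem_of_div_le hx hC hx0 ((hL.div_nonneg_of_not_subset hC hCB).trans ht) ht⟩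
  -- For `C ⊆ B` the explicit time is `-γ / ρ` (as `sSup ∅ = 0`), which may be negative.
  exact ⟨max 0 ((sSup (V '' closure (C \ B)) - γ) / ρ), le_max_left _ _,
    fun x hx hx0 t ht => hL.mem_of_div_le hx hC hx0 ((le_max_left _ _).trans ht)
      ((le_max_right _ _).trans ht)⟩

/-- Theorem 1: under the Lyapunov-type conditions, `B` is an absorbing set for the
switched system; moreover, for any compact `C ⊄ B` the explicit time
`t*_C = (max_{closure (C \ B)} V - γ)/ρ` works. -/
theorem absorbing_set_of_lyapunov {n N : ℕ}
    (f : Fin N → EuclideanSpace ℝ (Fin n) → EuclideanSpace ℝ (Fin n))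
    (hf : ∀ i, Continuous (f i))
    (V : EuclideanSpace ℝ (Fin n) → ℝ) (hV : ContDiff ℝ 1 V)
    (B : Set (EuclideanSpace ℝ (Fin n))) (hB : IsCompact B)
    (γ ρ : ℝ) (hρ : 0 < ρ)
    (hbd : ∀ x ∈ frontier B, V x = γ)
    (hgt : ∀ x ∉ B, V x > γ)
    (hdec : ∀ x ∉ B, ∀ i : Fin N, fderiv ℝ V x (f i x) ≤ -ρ) :
    AbsorbingSet f B ∧
      ∀ C : Set (EuclideanSpace ℝ (Fin n)), IsCompact C → ¬ C ⊆ B →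
        ∀ x : ℝ → EuclideanSpace ℝ (Fin n), IsSwitchedSolution f x → x 0 ∈ C →
          ∀ t : ℝ, (sSup (V '' closure (C \ B)) - γ) / ρ ≤ t → x t ∈ B :=
  absorbing_set_of_lyapunov_general f V hV B hB γ ρ hρ hbd hgt hdec
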